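/- arXiv:0807.3327 — 3 statements merged into one kernel-verified Lean document; each statement's English description precedes it below -/
import Mathlib

section
/- Let Z be a vector lattice and x ∈ Z with x ≥ 0. If y, z ∈ Z satisfy |y| ≤ z, then |x − x ∧ z| ≤ |x − x ∧ y|. -/
/-- In a vector lattice `Z`, for `x ≥ 0`, if `|y| ≤ z` then
`|x - x ⊓ z| ≤ |x - x ⊓ y|`. -/
theorem abs_sub_inf_le_of_abs_le {Z : Type*} [Lattice Z] [AddCommGroup Z]
    [Module ℝ Z] [CovariantClass Z Z (· + ·) (· ≤ ·)]
    (x : Z) (hx : 0 ≤ x) (y z : Z) (h : |y| ≤ z) :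
    |x - x ⊓ z| ≤ |x - x ⊓ y| := by
  rw [abs_of_nonneg (sub_nonneg.2 inf_le_left),
      abs_of_nonneg (sub_nonneg.2 inf_le_left)]
  exact sub_le_sub_left (inf_le_inf_left x ((le_abs_self y).trans h)) x
end

section
/- Let Y be a Banach lattice, X = Y*, and K : Y → Y an AM-compact operator. Then for every ξ ∈ Y with ξ ≥ 0, the adjoint K* is continuous as a map from the closed unit ball of X with the weak* topology to X equipped with the seminorm ρ_ξ(x) = |x|(ξ). -/
/-!
Write `g = K* x - K* x₀`. By the Riesz–Kantorovich formula, `|g| ξ ≤ sup {g η : -ξ ≤ η ≤ ξ}`,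
and `g η = (x - x₀) (K η)`. Since `K [-ξ, ξ]` is relatively compact it has a finite `ε/8`-net
`t`; weak* closeness of `x` to `x₀` at the points of `t`, together with `‖x - x₀‖ ≤ 2`, then
bounds `(x - x₀) (K η)` uniformly in `η ∈ [-ξ, ξ]`.
-/

open Set NormedSpace

/-- An operator on a Banach lattice is AM-compact if it maps every order interval
to a relatively norm-compact set. -/
def IsAMCompact {Y : Type*} [NormedAddCommGroup Y] [Lattice Y] [HasSolidNorm Y]
    [IsOrderedAddMonoid Y] [NormedSpace ℝ Y]
    (K : Y →L[ℝ] Y) : Prop :=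
  ∀ ξ : Y, 0 ≤ ξ → IsCompact (closure (K '' Set.Icc (-ξ) ξ))

/-- The adjoint of an operator `K : Y →L[ℝ] Y`, acting on `X = Y*` by `f ↦ f ∘ K`. -/
noncomputable def adjointOp {Y : Type*} [NormedAddCommGroup Y] [NormedSpace ℝ Y]
    (K : Y →L[ℝ] Y) : StrongDual ℝ Y →L[ℝ] StrongDual ℝ Y :=
  (ContinuousLinearMap.compL ℝ Y Y ℝ).flip K

open Pointwise

section LatticeOrderedGroup

variable {α : Type*} [AddCommGroup α] [Lattice α] [IsOrderedAddMonoid α]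

/-- Riesz decomposition for order intervals. -/
theorem Icc_neg_add_eq_add {a b : α} (ha : 0 ≤ a) (hb : 0 ≤ b) :
    Icc (-(a + b)) (a + b) = Icc (-a) a + Icc (-b) b := by
  refine Subset.antisymm ?_ (neg_add a b ▸ Icc_add_Icc_subset _ _ _ _)
  rintro ζ ⟨hζl, hζu⟩
  -- clamp `ζ` to `[-a, a]`; the remainder then lies in `[-b, b]`
  refine ⟨ζ ⊓ a ⊔ -a, ⟨le_sup_right, sup_le inf_le_right (neg_le_self ha)⟩,
    ζ - (ζ ⊓ a ⊔ -a), ⟨?_, ?_⟩, add_sub_cancel _ _⟩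
  · rw [sub_sup]
    refine le_inf ((neg_nonpos.2 hb).trans (sub_nonneg.2 inf_le_left)) ?_
    calc -b = -(a + b) + a := by abel
      _ ≤ ζ - -a := by rw [sub_neg_eq_add]; exact add_le_add_left hζl a
  · calc ζ - (ζ ⊓ a ⊔ -a) ≤ ζ - ζ ⊓ a := sub_le_sub_left le_sup_left ζ
      _ = 0 ⊔ (ζ - a) := by rw [sub_inf, sub_self]
      _ ≤ b := sup_le hb (sub_le_iff_le_add'.2 hζu)

def AddMonoidHom.ofNonnegAdditive {β : Type*} [AddCommGroup β] (F : α → β)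
    (hF : ∀ a b : α, 0 ≤ a → 0 ≤ b → F (a + b) = F a + F b) : α →+ β :=
  AddMonoidHom.mk' (fun y => F y⁺ - F y⁻) fun y z => by
    have hparts : (y + z)⁺ + (y⁻ + z⁻) = (y⁺ + z⁺) + (y + z)⁻ := by
      rw [← sub_eq_sub_iff_add_eq_add, posPart_sub_negPart, add_sub_add_comm,
        posPart_sub_negPart, posPart_sub_negPart]
    have h := congrArg F hparts
    rw [hF _ _ (posPart_nonneg _) (add_nonneg (negPart_nonneg _) (negPart_nonneg _)),
      hF _ _ (negPart_nonneg _) (negPart_nonneg _),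
      hF _ _ (add_nonneg (posPart_nonneg _) (posPart_nonneg _)) (negPart_nonneg _),
      hF _ _ (posPart_nonneg _) (posPart_nonneg _)] at h
    change F (y + z)⁺ - F (y + z)⁻ = (F y⁺ - F y⁻) + (F z⁺ - F z⁻)
    rw [sub_add_sub_comm, sub_eq_sub_iff_add_eq_add]
    exact h

theorem AddMonoidHom.ofNonnegAdditive_apply_of_nonneg {β : Type*} [AddCommGroup β]
    (F : α → β) (hF : ∀ a b : α, 0 ≤ a → 0 ≤ b → F (a + b) = F a + F b) {y : α} (hy : 0 ≤ y) :
    AddMonoidHom.ofNonnegAdditive F hF y = F y := by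
  have hF0 : F 0 = 0 := by simpa using hF 0 0 le_rfl le_rfl
  simp [AddMonoidHom.ofNonnegAdditive, posPart_eq_self.2 hy, negPart_eq_zero.2 hy, hF0]

end LatticeOrderedGroup

section NormedLattice

variable {Y : Type*} [NormedAddCommGroup Y] [Lattice Y] [HasSolidNorm Y] [IsOrderedAddMonoid Y]

theorem norm_posPart_le (y : Y) : ‖y⁺‖ ≤ ‖y‖ :=
  norm_le_norm_of_abs_le_abs <| by
    rw [abs_of_nonneg (posPart_nonneg y)]
    exact sup_le (le_abs_self y) (abs_nonneg y)

theorem norm_negPart_le (y : Y) : ‖y⁻‖ ≤ ‖y‖ := by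
  simpa [posPart_neg] using norm_posPart_le (-y)

theorem norm_le_of_mem_Icc_neg {ξ η : Y} (hξ : 0 ≤ ξ) (hη : η ∈ Icc (-ξ) ξ) : ‖η‖ ≤ ‖ξ‖ :=
  norm_le_norm_of_abs_le_abs <| by
    rw [abs_of_nonneg hξ]
    exact abs_le'.2 ⟨hη.2, neg_le.1 hη.1⟩

end NormedLattice

section IntervalSup

variable {Y : Type*} [NormedAddCommGroup Y] [Lattice Y] [IsOrderedAddMonoid Y] [NormedSpace ℝ Y]

/-- The supremum of `g` over the order interval `[-ξ, ξ]`; for `ξ ≥ 0` this is `|g| ξ` by the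
Riesz–Kantorovich formula. -/
noncomputable def intervalSup (g : StrongDual ℝ Y) (ξ : Y) : ℝ :=
  sSup (g '' Icc (-ξ) ξ)

theorem intervalSup_le {g : StrongDual ℝ Y} {ξ : Y} (hξ : 0 ≤ ξ) {r : ℝ}
    (h : ∀ η ∈ Icc (-ξ) ξ, g η ≤ r) : intervalSup g ξ ≤ r :=
  csSup_le ((nonempty_Icc.2 (neg_le_self hξ)).image g) (forall_mem_image.2 h)

variable [HasSolidNorm Y]

theorem apply_le_norm_mul_of_mem_Icc_neg (g : StrongDual ℝ Y) {ξ η : Y} (hξ : 0 ≤ ξ)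
    (hη : η ∈ Icc (-ξ) ξ) : g η ≤ ‖g‖ * ‖ξ‖ :=
  calc g η ≤ ‖g η‖ := Real.le_norm_self _
    _ ≤ ‖g‖ * ‖η‖ := g.le_opNorm η
    _ ≤ ‖g‖ * ‖ξ‖ := by gcongr; exact norm_le_of_mem_Icc_neg hξ hη

theorem bddAbove_image_Icc_neg (g : StrongDual ℝ Y) {ξ : Y} (hξ : 0 ≤ ξ) :
    BddAbove (g '' Icc (-ξ) ξ) :=
  ⟨‖g‖ * ‖ξ‖, forall_mem_image.2 fun _ => apply_le_norm_mul_of_mem_Icc_neg g hξ⟩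

theorem le_intervalSup (g : StrongDual ℝ Y) {ξ η : Y} (hξ : 0 ≤ ξ) (hη : η ∈ Icc (-ξ) ξ) :
    g η ≤ intervalSup g ξ :=
  le_csSup (bddAbove_image_Icc_neg g hξ) (mem_image_of_mem g hη)

theorem intervalSup_nonneg (g : StrongDual ℝ Y) {ξ : Y} (hξ : 0 ≤ ξ) : 0 ≤ intervalSup g ξ :=
  (map_zero g).symm.le.trans (le_intervalSup g hξ ⟨neg_nonpos.2 hξ, hξ⟩)

theorem intervalSup_le_norm_mul (g : StrongDual ℝ Y) {ξ : Y} (hξ : 0 ≤ ξ) :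
    intervalSup g ξ ≤ ‖g‖ * ‖ξ‖ :=
  intervalSup_le hξ fun _ => apply_le_norm_mul_of_mem_Icc_neg g hξ

theorem abs_le_intervalSup_self (g : StrongDual ℝ Y) {η : Y} (hη : 0 ≤ η) :
    |g η| ≤ intervalSup g η := by
  refine abs_le'.2 ⟨le_intervalSup g hη ⟨neg_le_self hη, le_rfl⟩, ?_⟩
  rw [← map_neg]
  exact le_intervalSup g hη ⟨le_rfl, neg_le_self hη⟩

theorem intervalSup_add (g : StrongDual ℝ Y) {a b : Y} (ha : 0 ≤ a) (hb : 0 ≤ b) :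
    intervalSup g (a + b) = intervalSup g a + intervalSup g b := by
  rw [intervalSup, Icc_neg_add_eq_add ha hb, image_add]
  exact csSup_add ((nonempty_Icc.2 (neg_le_self ha)).image g) (bddAbove_image_Icc_neg g ha)
    ((nonempty_Icc.2 (neg_le_self hb)).image g) (bddAbove_image_Icc_neg g hb)

/-- An upper bound of `g` and `-g` in `Y*`: the lattice operations of `Y*` are not given
explicitly, so this is how `|g|` gets bounded. -/
noncomputable def intervalSupDual (g : StrongDual ℝ Y) : StrongDual ℝ Y :=
  let F := AddMonoidHom.ofNonnegAdditive (intervalSup g) fun _ _ => intervalSup_add g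
  F.toRealLinearMap <| AddMonoidHomClass.continuous_of_bound F ‖g‖ fun y => by
    have bound (z : Y) (hz : 0 ≤ z) (hzy : ‖z‖ ≤ ‖y‖) : intervalSup g z ≤ ‖g‖ * ‖y‖ :=
      (intervalSup_le_norm_mul g hz).trans (by gcongr)
    exact abs_sub_le_of_nonneg_of_le (intervalSup_nonneg g (posPart_nonneg y))
      (bound _ (posPart_nonneg y) (norm_posPart_le y)) (intervalSup_nonneg g (negPart_nonneg y))
      (bound _ (negPart_nonneg y) (norm_negPart_le y))

theorem intervalSupDual_apply_of_nonneg (g : StrongDual ℝ Y) {η : Y} (hη : 0 ≤ η) :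
    intervalSupDual g η = intervalSup g η :=
  AddMonoidHom.ofNonnegAdditive_apply_of_nonneg _ (fun _ _ => intervalSup_add g) hη

end IntervalSup

section DualOrder

variable {Y : Type*} [NormedAddCommGroup Y] [NormedSpace ℝ Y] [LE Y]
  [Lattice (StrongDual ℝ Y)] [CovariantClass (StrongDual ℝ Y) (StrongDual ℝ Y) (· + ·) (· ≤ ·)]

theorem StrongDual.le_iff_forall_apply_le
    (hord : ∀ f : StrongDual ℝ Y, 0 ≤ f ↔ ∀ η : Y, 0 ≤ η → 0 ≤ f η) {f h : StrongDual ℝ Y} :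
    f ≤ h ↔ ∀ η : Y, 0 ≤ η → f η ≤ h η := by
  rw [← sub_nonneg, hord]
  simp only [sub_apply, sub_nonneg]

theorem StrongDual.abs_le_of_forall_abs_apply_le
    (hord : ∀ f : StrongDual ℝ Y, 0 ≤ f ↔ ∀ η : Y, 0 ≤ η → 0 ≤ f η) {g h : StrongDual ℝ Y}
    (hgh : ∀ η : Y, 0 ≤ η → |g η| ≤ h η) : |g| ≤ h := by
  rw [abs_le', StrongDual.le_iff_forall_apply_le hord, StrongDual.le_iff_forall_apply_le hord]
  exact ⟨fun η hη => (le_abs_self _).trans (hgh η hη),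
    fun η hη => (neg_le_abs _).trans (hgh η hη)⟩

end DualOrder

theorem abs_apply_le_intervalSup {Y : Type*} [NormedAddCommGroup Y] [Lattice Y] [HasSolidNorm Y]
    [IsOrderedAddMonoid Y] [NormedSpace ℝ Y] [Lattice (StrongDual ℝ Y)]
    [CovariantClass (StrongDual ℝ Y) (StrongDual ℝ Y) (· + ·) (· ≤ ·)]
    (hord : ∀ f : StrongDual ℝ Y, 0 ≤ f ↔ ∀ η : Y, 0 ≤ η → 0 ≤ f η) (g : StrongDual ℝ Y) {ξ : Y}
    (hξ : 0 ≤ ξ) : |g| ξ ≤ intervalSup g ξ := by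
  have habs : |g| ≤ intervalSupDual g := StrongDual.abs_le_of_forall_abs_apply_le hord
    fun η hη => (abs_le_intervalSup_self g hη).trans_eq (intervalSupDual_apply_of_nonneg g hη).symm
  rw [← intervalSupDual_apply_of_nonneg g hξ]
  exact (StrongDual.le_iff_forall_apply_le hord).1 habs ξ hξ

theorem StrongDual.apply_le_of_mem_iUnion_ball {E : Type*} [SeminormedAddCommGroup E]
    [NormedSpace ℝ E] {f : StrongDual ℝ E} {t : Set E} {z : E} {δ C r : ℝ}
    (hz : z ∈ ⋃ y ∈ t, Metric.ball y δ) (hf : ‖f‖ ≤ C) (ht : ∀ y ∈ t, f y ≤ r) :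
    f z ≤ C * δ + r := by
  obtain ⟨y, hyt, hzy⟩ := mem_iUnion₂.1 hz
  calc f z = f (z - y) + f y := by rw [map_sub, sub_add_cancel]
    _ ≤ ‖f‖ * ‖z - y‖ + r := add_le_add ((Real.le_norm_self _).trans (f.le_opNorm _)) (ht y hyt)
    _ ≤ C * δ + r := by
      gcongr
      · exact (norm_nonneg f).trans hf
      · exact (mem_ball_iff_norm.1 hzy).le

theorem WeakDual.eventually_forall_abs_sub_apply_lt {E : Type*} [NormedAddCommGroup E]
    [NormedSpace ℝ E] (x₀ : WeakDual ℝ E) {t : Set E} (ht : t.Finite) {r : ℝ} (hr : 0 < r) :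
    ∀ᶠ w in nhds x₀, ∀ y ∈ t, |w y - x₀ y| < r :=
  (Filter.eventually_all_finite ht).2 fun y _ =>
    ((WeakDual.eval_continuous y).tendsto x₀).eventually (Metric.ball_mem_nhds _ hr)

theorem adjoint_AMCompact_weakStar_to_seminorm_continuous_general
    {Y : Type*} [NormedAddCommGroup Y] [Lattice Y] [HasSolidNorm Y]
    [IsOrderedAddMonoid Y] [NormedSpace ℝ Y]
    [Lattice (StrongDual ℝ Y)]
    [CovariantClass (StrongDual ℝ Y) (StrongDual ℝ Y) (· + ·) (· ≤ ·)]
    (hord : ∀ f : StrongDual ℝ Y, 0 ≤ f ↔ ∀ η : Y, 0 ≤ η → 0 ≤ f η)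
    (K : Y →L[ℝ] Y) (hK : IsAMCompact K) (ξ : Y) (hξ : 0 ≤ ξ) :
    ∀ x₀ : StrongDual ℝ Y, ‖x₀‖ ≤ 1 → ∀ ε : ℝ, 0 < ε →
      ∃ U ∈ nhds (StrongDual.toWeakDual x₀),
        ∀ x : StrongDual ℝ Y, ‖x‖ ≤ 1 → StrongDual.toWeakDual x ∈ U →
          |adjointOp K x - adjointOp K x₀| ξ < ε := by
  intro x₀ hx₀ ε hε
  obtain ⟨t, -, htfin, hnet⟩ := (hK ξ hξ).finite_cover_balls (by positivity : 0 < ε / 8)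
  refine ⟨_, WeakDual.eventually_forall_abs_sub_apply_lt _ htfin (by positivity : 0 < ε / 4),
    fun x hx hxU => ?_⟩
  set g := adjointOp K x - adjointOp K x₀
  have hnorm : ‖x - x₀‖ ≤ 2 := (norm_sub_le x x₀).trans (by linarith)
  have hg : ∀ η ∈ Icc (-ξ) ξ, g η ≤ ε / 2 := fun η hη => by
    have hbound := StrongDual.apply_le_of_mem_iUnion_ball
      (hnet (subset_closure (mem_image_of_mem K hη))) hnorm
      fun y hy => (abs_lt.1 (hxU y hy)).2.le
    change (x - x₀) (K η) ≤ ε / 2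
    linarith
  calc |g| ξ ≤ intervalSup g ξ := abs_apply_le_intervalSup hord g hξ
    _ ≤ ε / 2 := intervalSup_le hξ hg
    _ < ε := by linarith

/-- If `K` is AM-compact on a Banach lattice `Y` and `ξ ≥ 0`, then the adjoint `K*`
is continuous from the closed unit ball of `X = Y*` with the weak* topology to `X`
with the seminorm `ρ_ξ(x) = |x|(ξ)`. Here `X = Y*` carries its (dual) lattice order,
described by `hord`. -/
theorem adjoint_AMCompact_weakStar_to_seminorm_continuous
    {Y : Type*} [NormedAddCommGroup Y] [Lattice Y] [HasSolidNorm Y]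
    [IsOrderedAddMonoid Y] [NormedSpace ℝ Y] [CompleteSpace Y]
    [Lattice (StrongDual ℝ Y)]
    [CovariantClass (StrongDual ℝ Y) (StrongDual ℝ Y) (· + ·) (· ≤ ·)]
    (hord : ∀ f : StrongDual ℝ Y, 0 ≤ f ↔ ∀ η : Y, 0 ≤ η → 0 ≤ f η)
    (K : Y →L[ℝ] Y) (hK : IsAMCompact K) (ξ : Y) (hξ : 0 ≤ ξ) :
    ∀ x₀ : StrongDual ℝ Y, ‖x₀‖ ≤ 1 → ∀ ε : ℝ, 0 < ε →
      ∃ U ∈ nhds (StrongDual.toWeakDual x₀),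
        ∀ x : StrongDual ℝ Y, ‖x‖ ≤ 1 → StrongDual.toWeakDual x ∈ U →
          |adjointOp K x - adjointOp K x₀| ξ < ε :=
  adjoint_AMCompact_weakStar_to_seminorm_continuous_general hord K hK ξ hξ
end

section
/- Every collection C of positive operators on ℓ_p, 1 < p < ∞, which is finitely quasinilpotent at a non-zero positive vector, has a non-trivial closed common invariant (order) ideal. -/
open Filter

/-- A collection `C` of operators is finitely quasinilpotent at `x` if for every finite
subcollection `F ⊆ C`, `limsup_n ‖F^n x‖^{1/n} = 0`. -/
def FinitelyQuasinilpotentAt {X : Type*} [NormedAddCommGroup X] [NormedSpace ℝ X]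
    (C : Set (X →L[ℝ] X)) (x : X) : Prop :=
  ∀ F : Finset (X →L[ℝ] X), ↑F ⊆ C →
    Filter.limsup (fun n : ℕ =>
      (⨆ g : Fin n → F, ‖(List.ofFn fun i => (g i : X →L[ℝ] X)).prod x‖) ^ ((n : ℝ)⁻¹))
      atTop = 0

/-!
Fix a coordinate `i` with `x₀ i > 0` and write `j ⇝ k` when some `T ∈ C` has a nonzero
`(k, j)` matrix entry. By positivity, a path `i ⇝ ⋯ ⇝ i` yields a word `A` in `C` with
`a := (A eᵢ) i > 0`, hence `(Aⁿ x₀) i ≥ x₀ i * aⁿ`, which is incompatible with quasinilpotence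
at `x₀`. So `i` lies on no cycle, and either the indices reachable from `i` or those reachable
by a nonempty path form a proper nonempty set closed under `⇝`; the sequences supported on that
set form the required ideal.
-/

open scoped ENNReal
open Relation Set Topology

section Words

variable {X : Type*} [NormedAddCommGroup X] [NormedSpace ℝ X]

theorem norm_list_prod_apply_le {M : ℝ} (hM : 0 ≤ M) {V : List (X →L[ℝ] X)}
    (hV : ∀ T ∈ V, ‖T‖ ≤ M) (x : X) : ‖V.prod x‖ ≤ M ^ V.length * ‖x‖ := by
  induction V with
  | nil => simp
  | cons T V ih =>
    rw [List.prod_cons, List.length_cons, pow_succ', mul_assoc]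
    exact (T.le_opNorm (V.prod x)).trans <| mul_le_mul (hV T List.mem_cons_self)
      (ih fun S hS => hV S (List.mem_cons_of_mem T hS)) (norm_nonneg _) hM

theorem FinitelyQuasinilpotentAt.eventually_norm_list_prod_apply_lt {C : Set (X →L[ℝ] X)}
    {x : X} (h : FinitelyQuasinilpotentAt C x) {F : Finset (X →L[ℝ] X)} (hF : ↑F ⊆ C)
    {ε : ℝ} (hε : 0 < ε) :
    ∀ᶠ n in atTop, ∀ V : List (X →L[ℝ] X), V.length = n → (∀ T ∈ V, T ∈ F) →
      ‖V.prod x‖ < ε ^ n := by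
  set s : ℕ → ℝ := fun n => ⨆ g : Fin n → F, ‖(List.ofFn fun i => (g i : X →L[ℝ] X)).prod x‖
  have hs_nonneg (n : ℕ) : 0 ≤ s n := Real.iSup_nonneg fun _ => norm_nonneg _
  have le_s (V : List (X →L[ℝ] X)) (hVF : ∀ T ∈ V, T ∈ F) : ‖V.prod x‖ ≤ s V.length := by
    refine le_trans ?_ <| le_ciSup (Set.finite_range _).bddAbove
      fun i => ⟨V.get i, hVF _ (V.get_mem i)⟩
    rw [List.ofFn_get]
  set M : ℝ := ∑ T ∈ F, ‖T‖
  set R : ℝ := max ‖x‖ 1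
  have hM : 0 ≤ M := Finset.sum_nonneg fun T _ => norm_nonneg T
  have hR : 1 ≤ R := le_max_right _ _
  have hs_le {n : ℕ} (hn : n ≠ 0) : s n ≤ (M * R) ^ n := by
    refine Real.iSup_le (fun g => ?_) (by positivity)
    calc _ ≤ M ^ n * ‖x‖ := by
          refine (norm_list_prod_apply_le hM (fun T hT => ?_) x).trans_eq (by rw [List.length_ofFn])
          obtain ⟨i, rfl⟩ := List.mem_ofFn.1 hT
          exact Finset.single_le_sum (fun S _ => norm_nonneg S) (g i).2
      _ ≤ M ^ n * R ^ n := by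
          gcongr
          exact (le_max_left _ _).trans (le_self_pow₀ hR hn)
      _ = (M * R) ^ n := (mul_pow M R n).symm
  -- `limsup` of an unbounded real sequence is a junk value, so boundedness has to be shown.
  have hbdd : IsBoundedUnder (· ≤ ·) atTop fun n : ℕ => s n ^ (n : ℝ)⁻¹ := by
    refine isBoundedUnder_of_eventually_le (a := M * R) ?_
    filter_upwards [eventually_ne_atTop 0] with n hn
    calc s n ^ (n : ℝ)⁻¹ ≤ ((M * R) ^ n) ^ (n : ℝ)⁻¹ :=
          Real.rpow_le_rpow (hs_nonneg n) (hs_le hn) (by positivity)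
      _ = M * R := Real.pow_rpow_inv_natCast (by positivity) hn
  filter_upwards [eventually_lt_of_limsup_lt ((h F hF).symm ▸ hε) hbdd,
    eventually_ne_atTop 0] with n hn hn0 V rfl hVF
  calc ‖V.prod x‖ ≤ s V.length := le_s V hVF
    _ = (s V.length ^ (V.length : ℝ)⁻¹) ^ V.length :=
        (Real.rpow_inv_natCast_pow (hs_nonneg _) hn0).symm
    _ < ε ^ V.length := pow_lt_pow_left₀ hn (Real.rpow_nonneg (hs_nonneg _) _) hn0

theorem FinitelyQuasinilpotentAt.eventually_norm_pow_apply_lt {C : Set (X →L[ℝ] X)}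
    {x : X} (h : FinitelyQuasinilpotentAt C x) {W : List (X →L[ℝ] X)} (hW : W ≠ [])
    (hWC : ∀ T ∈ W, T ∈ C) {a : ℝ} (ha : 0 < a) :
    ∀ᶠ n in atTop, ‖(W.prod ^ n) x‖ < a ^ n := by
  classical
  have hL : W.length ≠ 0 := (List.length_pos_iff.2 hW).ne'
  obtain ⟨N, hN⟩ := eventually_atTop.1 <| h.eventually_norm_list_prod_apply_lt
    (F := W.toFinset) (fun T hT => hWC T (List.mem_toFinset.1 hT))
    (Real.rpow_pos_of_pos ha (W.length : ℝ)⁻¹)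
  refine eventually_atTop.2 ⟨N, fun n hn => ?_⟩
  have := hN (n * W.length) (hn.trans (Nat.le_mul_of_pos_right n (Nat.pos_of_ne_zero hL)))
    (List.replicate n W).flatten (by simp)
    (fun T hT => List.mem_toFinset.2 (by simp_all))
  rwa [List.prod_flatten, List.map_replicate, List.prod_replicate, pow_mul',
    Real.rpow_inv_natCast_pow ha.le hL] at this

end Words

section Lp

variable {ι : Type*} {p : ℝ≥0∞}

local notation "ℓᵖ" => lp (fun _ : ι => ℝ) p

theorem exists_apply_pos {x : ℓᵖ} (hx : x ≠ 0) (hx_nonneg : ∀ i, 0 ≤ x i) :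
    ∃ i, 0 < x i := by
  by_contra! h
  exact hx (lp.ext (funext fun i => le_antisymm (h i) (hx_nonneg i)))

theorem single_one_nonneg [DecidableEq ι] (j i : ι) : 0 ≤ (lp.single p j 1 : ℓᵖ) i := by
  rw [lp.single_apply, Pi.single_apply]
  split_ifs <;> norm_num

variable (p) in
def supportedIn (A : Set ι) : Submodule ℝ ℓᵖ where
  carrier := {y | ∀ k ∉ A, y k = 0}
  add_mem' hy hz k hk := by simp [hy k hk, hz k hk]
  zero_mem' _ _ := rfl
  smul_mem' c y hy k hk := by simp [hy k hk]

theorem mem_supportedIn_of_abs_le {A : Set ι} {x y : ℓᵖ} (hxy : ∀ i, |x i| ≤ |y i|)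
    (hy : y ∈ supportedIn p A) : x ∈ supportedIn p A := fun k hk =>
  abs_eq_zero.1 <| le_antisymm ((hxy k).trans_eq (by rw [hy k hk, abs_zero])) (abs_nonneg _)

theorem single_one_mem_supportedIn_iff [DecidableEq ι] {A : Set ι} {j : ι} :
    (lp.single p j 1 : ℓᵖ) ∈ supportedIn p A ↔ j ∈ A := by
  refine ⟨fun h => by_contra fun hj => ?_, fun hj k hk => ?_⟩
  · simpa using h j hj
  · exact lp.single_apply_ne p j 1 (ne_of_mem_of_not_mem hj hk).symm

variable [Fact (1 ≤ p)]

theorem isClosed_supportedIn (A : Set ι) : IsClosed (supportedIn p A : Set ℓᵖ) := by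
  simp only [supportedIn, Submodule.coe_set_mk, AddSubmonoid.coe_set_mk,
    AddSubsemigroup.coe_set_mk, Set.ofPred_forall]
  exact isClosed_iInter fun k => isClosed_iInter fun _ =>
    isClosed_eq (lp.evalCLM ℝ (fun _ : ι => ℝ) p k).continuous continuous_const

theorem apply_mem_supportedIn [DecidableEq ι] (hp : p ≠ ⊤) {A : Set ι} {T : ℓᵖ →L[ℝ] ℓᵖ}
    (hT : ∀ j ∈ A, ∀ k, T (lp.single p j 1) k ≠ 0 → k ∈ A) {z : ℓᵖ}
    (hz : z ∈ supportedIn p A) : T z ∈ supportedIn p A := by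
  intro k hk
  let Tk : ℓᵖ →L[ℝ] ℝ := (lp.evalCLM ℝ (fun _ : ι => ℝ) p k).comp T
  have hterm (j : ι) : Tk (lp.single p j (z j)) = 0 := by
    by_cases hj : j ∈ A
    · have hTjk : T (lp.single p j 1) k = 0 := by_contra fun h => hk (hT j hj k h)
      rw [← mul_one (z j), ← smul_eq_mul, lp.single_smul]
      show T (z j • lp.single p j 1) k = 0
      rw [map_smul, lp.coeFn_smul, Pi.smul_apply, hTjk, smul_zero]
    · rw [hz j hj, lp.single_zero, map_zero]
  have hsum := (lp.hasSum_single hp z).mapL Tk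
  rw [funext hterm] at hsum
  exact hsum.unique hasSum_zero

variable (ι p) in
def positiveOperators : Submonoid (ℓᵖ →L[ℝ] ℓᵖ) where
  carrier := {T | ∀ x : ℓᵖ, (∀ i, 0 ≤ x i) → ∀ i, 0 ≤ T x i}
  mul_mem' hS hT x hx := hS _ (hT x hx)
  one_mem' _ hx := hx

variable [DecidableEq ι]

theorem mul_apply_single_one_le {T : ℓᵖ →L[ℝ] ℓᵖ} (hT : T ∈ positiveOperators ι p) {u : ℓᵖ}
    (hu : ∀ i, 0 ≤ u i) (j k : ι) : u j * T (lp.single p j 1) k ≤ T u k := by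
  have hdom : ∀ i, 0 ≤ (u - u j • (lp.single p j 1 : ℓᵖ)) i := fun i => by
    rw [lp.coeFn_sub, lp.coeFn_smul, Pi.sub_apply, Pi.smul_apply, lp.single_apply,
      Pi.single_apply, smul_eq_mul]
    split_ifs with h
    · simp [h]
    · simpa using hu i
  have := hT _ hdom k
  rwa [map_sub, map_smul, lp.coeFn_sub, lp.coeFn_smul, Pi.sub_apply, Pi.smul_apply,
    smul_eq_mul, sub_nonneg] at this

def EntryAdj (C : Set (ℓᵖ →L[ℝ] ℓᵖ)) (j k : ι) : Prop :=
  ∃ T ∈ C, T (lp.single p j 1) k ≠ 0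

theorem exists_closed_invariant_ideal (hp : p ≠ ⊤) {C : Set (ℓᵖ →L[ℝ] ℓᵖ)} {A : Set ι}
    (hA : A.Nonempty) (hA' : A ≠ univ) (hC : ∀ j ∈ A, ∀ k, EntryAdj C j k → k ∈ A) :
    ∃ J : Submodule ℝ ℓᵖ, IsClosed (J : Set ℓᵖ) ∧ J ≠ ⊥ ∧ J ≠ ⊤ ∧
      (∀ x y : ℓᵖ, (∀ i, |x i| ≤ |y i|) → y ∈ J → x ∈ J) ∧ (∀ T ∈ C, ∀ z ∈ J, T z ∈ J) := by
  obtain ⟨i, hi⟩ := hA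
  obtain ⟨k, hk⟩ := (ne_univ_iff_exists_notMem A).1 hA'
  refine ⟨supportedIn p A, isClosed_supportedIn A, ?_, ?_, fun x y => mem_supportedIn_of_abs_le,
    fun T hT z => apply_mem_supportedIn hp fun j hj l hjl => hC j hj l ⟨T, hT, hjl⟩⟩
  · refine (Submodule.ne_bot_iff _).2 ⟨_, single_one_mem_supportedIn_iff.2 hi, fun h => ?_⟩
    simpa using congr_arg (fun y : ℓᵖ => y i) h
  · exact fun h => hk (single_one_mem_supportedIn_iff.1 (h ▸ Submodule.mem_top))

theorem exists_list_prod_apply_pos_of_transGen {C : Set (ℓᵖ →L[ℝ] ℓᵖ)}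
    (hC : C ⊆ positiveOperators ι p) {i k : ι} (h : TransGen (EntryAdj C) i k) :
    ∃ W : List (ℓᵖ →L[ℝ] ℓᵖ), W ≠ [] ∧ (∀ T ∈ W, T ∈ C) ∧
      0 < W.prod (lp.single p i 1) k := by
  induction h with
  | single hik =>
    obtain ⟨T, hT, hne⟩ := hik
    exact ⟨[T], List.cons_ne_nil T [], by simpa using hT,
      by simpa using (hC hT _ (single_one_nonneg i) _).lt_of_ne' hne⟩
  | @tail j k _ hjk ih =>
    obtain ⟨W, hW, hWC, hWpos⟩ := ih
    obtain ⟨T, hT, hne⟩ := hjk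
    have hWnonneg := (positiveOperators ι p).list_prod_mem (fun S hS => hC (hWC S hS)) _
      (single_one_nonneg i)
    refine ⟨T :: W, List.cons_ne_nil T W, List.forall_mem_cons.2 ⟨hT, hWC⟩, ?_⟩
    calc 0 < W.prod (lp.single p i 1) j * T (lp.single p j 1) k :=
          mul_pos hWpos ((hC hT _ (single_one_nonneg j) k).lt_of_ne' hne)
      _ ≤ T (W.prod (lp.single p i 1)) k := mul_apply_single_one_le (hC hT) hWnonneg j k

theorem FinitelyQuasinilpotentAt.not_transGen_entryAdj_self {C : Set (ℓᵖ →L[ℝ] ℓᵖ)}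
    (hC : C ⊆ positiveOperators ι p) {x : ℓᵖ} (hqn : FinitelyQuasinilpotentAt C x)
    (hx : ∀ i, 0 ≤ x i) {i : ι} (hi : 0 < x i) : ¬ TransGen (EntryAdj C) i i := by
  intro h
  obtain ⟨W, hW, hWC, ha⟩ := exists_list_prod_apply_pos_of_transGen hC h
  set A := W.prod
  set a := A (lp.single p i 1) i
  have hA : A ∈ positiveOperators ι p :=
    (positiveOperators ι p).list_prod_mem fun S hS => hC (hWC S hS)
  have lower (n : ℕ) : x i * a ^ n ≤ (A ^ n) x i := by
    induction n with
    | zero => simp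
    | succ n ih =>
      calc x i * a ^ (n + 1) = x i * a ^ n * a := by ring
        _ ≤ (A ^ n) x i * a := by gcongr
        _ ≤ (A ^ (n + 1)) x i := by
          rw [pow_succ']
          exact mul_apply_single_one_le hA (pow_mem hA n x hx) i i
  have hhalf : Tendsto (fun n : ℕ => (1 / 2 : ℝ) ^ n) atTop (𝓝 0) :=
    tendsto_pow_atTop_nhds_zero_of_lt_one (by norm_num) (by norm_num)
  obtain ⟨n, hn, hsmall⟩ := ((hqn.eventually_norm_pow_apply_lt hW hWC (half_pos ha)).and
    (hhalf.eventually (gt_mem_nhds hi))).exists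
  have : x i * a ^ n < x i * a ^ n := calc
    x i * a ^ n ≤ (A ^ n) x i := lower n
    _ ≤ ‖(A ^ n) x‖ := (Real.le_norm_self _).trans
        (lp.norm_apply_le_norm (zero_lt_one.trans_le Fact.out).ne' _ i)
    _ < (a / 2) ^ n := hn
    _ = (1 / 2) ^ n * a ^ n := by rw [← mul_pow]; ring
    _ < x i * a ^ n := by gcongr
  exact lt_irrefl _ this

end Lp

theorem invariant_ideal_lp_general (p : ENNReal) [Fact (1 ≤ p)] (hp' : p ≠ ⊤)
    (C : Set (lp (fun _ : ℕ => ℝ) p →L[ℝ] lp (fun _ : ℕ => ℝ) p))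
    (hpos : ∀ T ∈ C, ∀ x : lp (fun _ : ℕ => ℝ) p,
      (∀ i, 0 ≤ x i) → ∀ i, 0 ≤ (T x) i)
    (x₀ : lp (fun _ : ℕ => ℝ) p) (hx₀ : x₀ ≠ 0) (hx₀pos : ∀ i, 0 ≤ x₀ i)
    (hqn : FinitelyQuasinilpotentAt C x₀) :
    ∃ J : Submodule ℝ (lp (fun _ : ℕ => ℝ) p),
      IsClosed (J : Set (lp (fun _ : ℕ => ℝ) p)) ∧ J ≠ ⊥ ∧ J ≠ ⊤ ∧
      (∀ x y : lp (fun _ : ℕ => ℝ) p, (∀ i, |x i| ≤ |y i|) → y ∈ J → x ∈ J) ∧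
      (∀ T ∈ C, ∀ z ∈ J, T z ∈ J) := by
  obtain ⟨i, hi⟩ := exists_apply_pos hx₀ hx₀pos
  have hcycle := hqn.not_transGen_entryAdj_self hpos hx₀pos hi
  by_cases hreach : {k | ReflTransGen (EntryAdj C) i k} = univ
  · obtain ⟨k, hk⟩ := exists_ne i
    have hik := reflTransGen_iff_eq_or_transGen.1 (hreach ▸ mem_univ k : ReflTransGen _ i k)
    exact exists_closed_invariant_ideal hp' ⟨k, hik.resolve_left hk⟩
      (fun h => hcycle (h ▸ mem_univ i : TransGen _ i i)) fun j hj l hjl => hj.tail hjl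
  · exact exists_closed_invariant_ideal hp' ⟨i, .refl⟩ hreach fun j hj l hjl => hj.tail hjl

/-- Every collection of positive operators on `ℓ_p`, `1 < p < ∞`, which is finitely
quasinilpotent at a non-zero positive vector, has a non-trivial closed common invariant
order ideal. Here the order on `ℓ_p` is coordinatewise. -/
theorem invariant_ideal_lp (p : ENNReal) [Fact (1 ≤ p)] (hp : 1 < p) (hp' : p ≠ ⊤)
    (C : Set (lp (fun _ : ℕ => ℝ) p →L[ℝ] lp (fun _ : ℕ => ℝ) p))
    (hpos : ∀ T ∈ C, ∀ x : lp (fun _ : ℕ => ℝ) p,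
      (∀ i, 0 ≤ x i) → ∀ i, 0 ≤ (T x) i)
    (x₀ : lp (fun _ : ℕ => ℝ) p) (hx₀ : x₀ ≠ 0) (hx₀pos : ∀ i, 0 ≤ x₀ i)
    (hqn : FinitelyQuasinilpotentAt C x₀) :
    ∃ J : Submodule ℝ (lp (fun _ : ℕ => ℝ) p),
      IsClosed (J : Set (lp (fun _ : ℕ => ℝ) p)) ∧ J ≠ ⊥ ∧ J ≠ ⊤ ∧
      (∀ x y : lp (fun _ : ℕ => ℝ) p, (∀ i, |x i| ≤ |y i|) → y ∈ J → x ∈ J) ∧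
      (∀ T ∈ C, ∀ z ∈ J, T z ∈ J) :=
  invariant_ideal_lp_general p hp' C hpos x₀ hx₀ hx₀pos hqn
end
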